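/- arXiv:1912.10980 — 2 statements merged into one kernel-verified Lean document; each statement's English description precedes it below -/
import Mathlib

section
/- Every finite subgroup of GL(2, ℝ) is either cyclic or dihedral. -/
/-!
Averaging the standard inner product over the finite group `G` gives a `G`-invariant positive
definite Gram matrix `N`, so conjugating by `√N` moves `G` into `O(2)`. The rotations in `G` then
form a finite subgroup of `SO(2) ≅ U(1) ⊆ ℂˣ`, hence a cyclic group, say of order `n`. If `G`
contains a reflection, the rotations have index two and every reflection is an involution, so a
reflection `s` satisfies `s r s = r⁻¹` for every rotation `r`, and `G` is dihedral of order `2n`.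
-/

section Dihedral

open DihedralGroup

variable {K : Type*} [Group K]

theorem Subgroup.mul_eq_mul_inv_of_index_two {H : Subgroup K} (hH : H.index = 2)
    (hinv : ∀ a ∉ H, a * a = 1) {h s : K} (hh : h ∈ H) (hs : s ∉ H) : h * s = s * h⁻¹ := by
  have hhs : h * s ∉ H := by simpa [Subgroup.mul_mem_iff_of_index_two hH, hh] using hs
  rw [← inv_eq_of_mul_eq_one_right (hinv _ hhs), mul_inv_rev,
    inv_eq_of_mul_eq_one_right (hinv s hs)]

def dihedralGroupLift {n : ℕ} (ρ : Multiplicative (ZMod n) →* K) (s : K)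
    (hs : s * s = 1) (hρs : ∀ i, ρ i * s = s * (ρ i)⁻¹) : DihedralGroup n →* K where
  toFun
    | r i => ρ (.ofAdd i)
    | sr i => s * ρ (.ofAdd i)
  map_one' := by rw [one_def]; exact ρ.map_one
  map_mul' := by
    rintro (i | i) (j | j)
    · show ρ (.ofAdd (i + j)) = ρ (.ofAdd i) * ρ (.ofAdd j)
      rw [ofAdd_add, map_mul]
    · show s * ρ (.ofAdd (j - i)) = ρ (.ofAdd i) * (s * ρ (.ofAdd j))
      rw [← neg_add_eq_sub, ofAdd_add, ofAdd_neg, map_mul, map_inv, ← mul_assoc, ← mul_assoc, hρs]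
    · show s * ρ (.ofAdd (i + j)) = s * ρ (.ofAdd i) * ρ (.ofAdd j)
      rw [ofAdd_add, map_mul, mul_assoc]
    · show ρ (.ofAdd (j - i)) = s * ρ (.ofAdd i) * (s * ρ (.ofAdd j))
      rw [← neg_add_eq_sub, ofAdd_add, ofAdd_neg, map_mul, map_inv, mul_assoc, ← mul_assoc _ s,
        hρs, ← mul_assoc, ← mul_assoc, hs, one_mul]

theorem Subgroup.nonempty_mulEquiv_dihedralGroup [Finite K] (H : Subgroup K) [hc : IsCyclic H]
    (hH : H.index = 2) (hinv : ∀ a ∉ H, a * a = 1) :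
    Nonempty (K ≃* DihedralGroup (Nat.card H)) := by
  obtain ⟨s, hs, -⟩ := Subgroup.index_eq_two_iff_exists_notMem_and.mp hH
  let e := zmodCyclicMulEquiv hc
  let ρ := H.subtype.comp e.toMonoidHom
  have hρH (i) : ρ i ∈ H := (e i).2
  have hsρH (i) : s * ρ i ∉ H := (H.mul_mem_cancel_right (hρH i)).not.mpr hs
  have hρ : Function.Injective ρ := H.subtype_injective.comp e.injective
  let f := dihedralGroupLift ρ s (hinv s hs) fun i ↦
    H.mul_eq_mul_inv_of_index_two hH hinv (hρH i) hs
  have hf : Function.Injective f := by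
    rintro (i | i) (j | j) hij
    · exact congrArg r (hρ hij)
    · exact absurd (hij ▸ hρH _) (hsρH _)
    · exact absurd (hij ▸ hρH _) (hsρH _)
    · exact congrArg sr (hρ (mul_left_cancel hij))
  have hcard : Nat.card K ≤ Nat.card (DihedralGroup (Nat.card H)) := by
    rw [nat_card, ← H.index_mul_card, hH]
  exact ⟨(MulEquiv.ofBijective f (hf.bijective_of_nat_card_le hcard)).symm⟩

end Dihedral

section Averaging

open Matrix

open scoped MatrixOrder ComplexOrder

variable {𝕜 n : Type*} [RCLike 𝕜] [Fintype n] [DecidableEq n]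

theorem Matrix.PosDef.sqrt_mul_mul_inv_sqrt_mem_unitaryGroup {N g : Matrix n n 𝕜}
    (hN : N.PosDef) (hg : gᴴ * N * g = N) :
    CFC.sqrt N * g * (CFC.sqrt N)⁻¹ ∈ unitaryGroup n 𝕜 := by
  set S := CFC.sqrt N
  have hSS : S * S = N := CFC.sqrt_mul_sqrt_self N hN.posSemidef.nonneg
  have hSH : Sᴴ = S := (CFC.sqrt_nonneg N).posSemidef.1
  have hS : IsUnit S.det :=
    (isUnit_iff_isUnit_det S).mp (CFC.isUnit_sqrt_iff_isStrictlyPositive.mpr hN.isStrictlyPositive)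
  rw [mem_unitaryGroup_iff', star_eq_conjTranspose]
  calc (S * g * S⁻¹)ᴴ * (S * g * S⁻¹) = S⁻¹ * (gᴴ * (S * S) * g) * S⁻¹ := by
        simp only [conjTranspose_mul, conjTranspose_nonsing_inv, hSH, Matrix.mul_assoc]
    _ = (S⁻¹ * S) * (S * S⁻¹) := by rw [hSS, hg, ← hSS]; noncomm_ring
    _ = 1 := by rw [nonsing_inv_mul _ hS, mul_nonsing_inv _ hS, one_mul]

noncomputable def Subgroup.invariantGram (G : Subgroup (GL n 𝕜)) [Fintype G] : Matrix n n 𝕜 :=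
  ∑ g : G, (g.1 : Matrix n n 𝕜)ᴴ * g.1

theorem Subgroup.posDef_invariantGram (G : Subgroup (GL n 𝕜)) [Fintype G] :
    G.invariantGram.PosDef := by
  classical
  rw [Subgroup.invariantGram, ← Finset.add_sum_erase _ _ (Finset.mem_univ 1)]
  have h1 : ((1 : G).1 : Matrix n n 𝕜)ᴴ * (1 : G).1 = 1 := by simp
  exact h1 ▸ PosDef.one.add_posSemidef
    (posSemidef_sum _ fun (g : G) _ ↦ posSemidef_conjTranspose_mul_self (g.1 : Matrix n n 𝕜))

theorem Subgroup.conjTranspose_mul_invariantGram_mul (G : Subgroup (GL n 𝕜)) [Fintype G]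
    {h : GL n 𝕜} (hh : h ∈ G) : (h : Matrix n n 𝕜)ᴴ * G.invariantGram * h = G.invariantGram := by
  rw [Subgroup.invariantGram, Finset.mul_sum, Finset.sum_mul]
  refine Fintype.sum_equiv (Equiv.mulRight ⟨h, hh⟩) _ _ fun g ↦ ?_
  simp only [Equiv.coe_mulRight, Subgroup.coe_mul, Units.val_mul, conjTranspose_mul,
    Matrix.mul_assoc]

theorem Matrix.GeneralLinearGroup.exists_conj_mem_unitaryGroup (G : Subgroup (GL n 𝕜))
    [Finite G] :
    ∃ u : GL n 𝕜, ∀ g ∈ G, ((u * g * u⁻¹ : GL n 𝕜) : Matrix n n 𝕜) ∈ unitaryGroup n 𝕜 := by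
  cases nonempty_fintype G
  have hN := G.posDef_invariantGram
  refine ⟨(CFC.isUnit_sqrt_iff_isStrictlyPositive.mpr hN.isStrictlyPositive).unit, fun g hg ↦ ?_⟩
  simpa [coe_units_inv] using
    hN.sqrt_mul_mul_inv_sqrt_mem_unitaryGroup (G.conjTranspose_mul_invariantGram_mul hg)

end Averaging

namespace Matrix

theorem mul_self_eq_one_of_mem_orthogonalGroup_of_det_eq_neg_one {A : Matrix (Fin 2) (Fin 2) ℝ}
    (hA : A ∈ orthogonalGroup (Fin 2) ℝ) (hdet : A.det = -1) : A * A = 1 := by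
  rw [mem_orthogonalGroup_iff'] at hA
  rw [det_fin_two] at hdet
  simp only [← ext_iff, Matrix.mul_apply, transpose_apply, Fin.sum_univ_two, Fin.forall_fin_two,
    one_apply_eq, one_apply_ne, ne_eq, zero_ne_one, one_ne_zero, not_false_eq_true] at hA ⊢
  obtain ⟨⟨e00, e01⟩, -, e11⟩ := hA
  -- `A` is a reflection `!![a, b; b, -a]` with `a ^ 2 + b ^ 2 = 1`.
  have hd : A 1 1 = -A 0 0 := by linear_combination A 1 1 * hdet + A 0 1 * e01 - A 0 0 * e11
  have hb : A 0 1 = A 1 0 := by linear_combination A 0 0 * e01 - A 1 0 * hdet - A 0 1 * e00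
  rw [hd, hb]
  exact ⟨⟨by linear_combination e00, by ring⟩, by ring, by linear_combination e00⟩

/-- A rotation matrix `!![a, -b; b, a]` as the complex number `a + b i`. -/
noncomputable def specialOrthogonalGroupToComplex :
    specialOrthogonalGroup (Fin 2) ℝ →* ℂ where
  toFun A := ⟨(A : Matrix (Fin 2) (Fin 2) ℝ) 0 0, (A : Matrix (Fin 2) (Fin 2) ℝ) 1 0⟩
  map_one' := Complex.ext (by simp) (by simp)
  map_mul' A B := by
    obtain ⟨h1, h2, -⟩ := mem_specialOrthogonalGroup_fin_two_iff.mp A.2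
    apply Complex.ext <;> simp [Matrix.mul_apply, h1, h2] <;> ring

theorem specialOrthogonalGroupToComplex_injective :
    Function.Injective specialOrthogonalGroupToComplex := by
  intro A B h
  obtain ⟨hA1, hA2, -⟩ := mem_specialOrthogonalGroup_fin_two_iff.mp A.2
  obtain ⟨hB1, hB2, -⟩ := mem_specialOrthogonalGroup_fin_two_iff.mp B.2
  simp only [specialOrthogonalGroupToComplex, MonoidHom.coe_mk, OneHom.coe_mk,
    Complex.mk.injEq] at h
  ext i j
  fin_cases i <;> fin_cases j
  · exact h.1
  · simp [hA2, hB2, h.2]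
  · exact h.2
  · simp [← hA1, ← hB1, h.1]

end Matrix

section Orthogonal

open Matrix

variable {L : Type*} [Group L] [Finite L]

theorem isCyclic_of_injective_of_mem_specialOrthogonalGroup (φ : L →* Matrix (Fin 2) (Fin 2) ℝ)
    (hφ : Function.Injective φ) (hSO : ∀ x, φ x ∈ specialOrthogonalGroup (Fin 2) ℝ) :
    IsCyclic L :=
  isCyclic_of_injective_ringHom (specialOrthogonalGroupToComplex.comp (φ.codRestrict _ hSO))
    (specialOrthogonalGroupToComplex_injective.comp fun _ _ h ↦ hφ (congrArg Subtype.val h))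

theorem isCyclic_or_nonempty_mulEquiv_dihedralGroup_of_mem_orthogonalGroup
    (φ : L →* Matrix (Fin 2) (Fin 2) ℝ) (hφ : Function.Injective φ)
    (hO : ∀ x, φ x ∈ orthogonalGroup (Fin 2) ℝ) :
    IsCyclic L ∨ ∃ n : ℕ, 1 ≤ n ∧ Nonempty (L ≃* DihedralGroup n) := by
  have hdet (x : L) : (φ x).det = 1 ∨ (φ x).det = -1 :=
    mul_self_eq_one_iff.mp (by simpa using Unitary.star_mul_self_of_mem (det_of_mem_unitary (hO x)))
  by_cases hall : ∀ x, (φ x).det = 1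
  · exact .inl (isCyclic_of_injective_of_mem_specialOrthogonalGroup φ hφ fun x ↦ ⟨hO x, hall x⟩)
  obtain ⟨s, hs⟩ := not_forall.mp hall
  replace hs := (hdet s).resolve_left hs
  let H := (detMonoidHom.comp φ).ker
  have hmem (x : L) : x ∈ H ↔ (φ x).det = 1 := MonoidHom.mem_ker
  have : IsCyclic H := isCyclic_of_injective_of_mem_specialOrthogonalGroup (φ.comp H.subtype)
    (hφ.comp H.subtype_injective) fun x ↦ ⟨hO x, (hmem x).mp x.2⟩
  have hH : H.index = 2 := by
    refine Subgroup.index_eq_two_iff.mpr ⟨s, fun b ↦ ?_⟩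
    rcases hdet b with hb | hb <;> simp [hmem, det_mul, hb, hs] <;> norm_num
  have hinv (a : L) (ha : a ∉ H) : a * a = 1 := hφ <| by
    rw [map_mul, map_one]
    exact mul_self_eq_one_of_mem_orthogonalGroup_of_det_eq_neg_one (hO a)
      ((hdet a).resolve_left ((hmem a).not.mp ha))
  exact .inr ⟨_, Nat.card_pos, H.nonempty_mulEquiv_dihedralGroup hH hinv⟩

end Orthogonal

/-- Every finite subgroup of GL(2, ℝ) is either cyclic or dihedral. -/
theorem stmt_0 (G : Subgroup (Matrix.GeneralLinearGroup (Fin 2) ℝ)) [Finite G] :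
    IsCyclic G ∨ ∃ n : ℕ, 1 ≤ n ∧ Nonempty (G ≃* DihedralGroup n) := by
  obtain ⟨u, hu⟩ := Matrix.GeneralLinearGroup.exists_conj_mem_unitaryGroup G
  let φ : G →* Matrix (Fin 2) (Fin 2) ℝ :=
    (Units.coeHom _).comp ((MulAut.conj u).toMonoidHom.comp G.subtype)
  exact isCyclic_or_nonempty_mulEquiv_dihedralGroup_of_mem_orthogonalGroup φ
    (Units.val_injective.comp ((MulAut.conj u).injective.comp G.subtype_injective))
    fun g ↦ hu g g.2
end

section
/- Let ω be a primitive n-th root of unity and let the cyclic group ℤ/n act on ℝ[x,y] via the rotation x ↦ cos(2π/n)x − sin(2π/n)y, y ↦ sin(2π/n)x + cos(2π/n)y. Then the ring of invariants ℝ[x,y]^{ℤ/n} is generated by x² + y², Re((x+iy)ⁿ), and Im((x+iy)ⁿ). -/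
open MvPolynomial

noncomputable section Aux12

private abbrev Rp := MvPolynomial (Fin 2) ℝ
private abbrev Kp := MvPolynomial (Fin 2) ℂ






/-- coefficientwise injectivity of real+imaginary decomposition -/
lemma aux12_re_im (a b : Rp) (h : MvPolynomial.map (algebraMap ℝ ℂ) a
    = C Complex.I * MvPolynomial.map (algebraMap ℝ ℂ) b) : a = 0 ∧ b = 0 := by
  have key : ∀ m : Fin 2 →₀ ℕ, a.coeff m = 0 ∧ b.coeff m = 0 := by
    intro m
    have := congrArg (MvPolynomial.coeff m) h
    rw [MvPolynomial.coeff_map, MvPolynomial.coeff_C_mul, MvPolynomial.coeff_map] at this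
    have h1 := congrArg Complex.re this
    have h2 := congrArg Complex.im this
    simp [Complex.ofReal_re, Complex.ofReal_im] at h1 h2
    constructor
    · simpa using h1
    · simpa using h2.symm
  constructor <;> [skip; skip] <;>
  · ext m
    simp [ (key m).1, (key m).2]

/-- complex adjoin of image decomposes into real + i * real -/
lemma aux12_decomp (S : Set Rp) (F : Kp)
    (hF : F ∈ Algebra.adjoin ℂ (MvPolynomial.map (algebraMap ℝ ℂ) '' S)) :
    ∃ P Q : Rp, P ∈ Algebra.adjoin ℝ S ∧ Q ∈ Algebra.adjoin ℝ S ∧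
      F = MvPolynomial.map (algebraMap ℝ ℂ) P + C Complex.I * MvPolynomial.map (algebraMap ℝ ℂ) Q := by
  induction hF using Algebra.adjoin_induction with
  | mem x hx =>
    obtain ⟨p, hp, rfl⟩ := hx
    exact ⟨p, 0, Algebra.subset_adjoin hp, Subalgebra.zero_mem _, by simp⟩
  | algebraMap r =>
    refine ⟨C r.re, C r.im, ?_, ?_, ?_⟩
    · exact Subalgebra.algebraMap_mem _ r.re
    · exact Subalgebra.algebraMap_mem _ r.im
    · have : (algebraMap ℂ Kp) r = C r := rfl
      rw [this, map_C, map_C, ← map_mul, ← map_add]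
      congr 1
      simp [Complex.ext_iff]
  | add x y hx hy ihx ihy =>
    obtain ⟨P, Q, hP, hQ, rfl⟩ := ihx
    obtain ⟨P', Q', hP', hQ', rfl⟩ := ihy
    exact ⟨P + P', Q + Q', add_mem hP hP', add_mem hQ hQ', by push_cast [map_add]; ring⟩
  | mul x y hx hy ihx ihy =>
    obtain ⟨P, Q, hP, hQ, rfl⟩ := ihx
    obtain ⟨P', Q', hP', hQ', rfl⟩ := ihy
    refine ⟨P * P' - Q * Q', P * Q' + Q * P',
      sub_mem (mul_mem hP hP') (mul_mem hQ hQ'),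
      add_mem (mul_mem hP hQ') (mul_mem hQ hP'), ?_⟩
    have hI : (C Complex.I : Kp) ^ 2 = -1 := by
      rw [← map_pow, Complex.I_sq, map_neg, map_one]
    push_cast [map_add, map_sub, map_mul]
    linear_combination (MvPolynomial.map (algebraMap ℝ ℂ) Q * MvPolynomial.map (algebraMap ℝ ℂ) Q') * hI





lemma aux12_monomial_eq (m : Fin 2 →₀ ℕ) (c : ℂ) :
    (monomial m c : Kp) = C c * X 0 ^ m 0 * X 1 ^ m 1 := by
  rw [monomial_eq, Finsupp.prod_fintype _ _ (fun i => pow_zero _), Fin.prod_univ_two, mul_assoc]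

lemma aux12_diag_monomial (a b : ℂ) (m : Fin 2 →₀ ℕ) (c : ℂ) :
    aeval ![C a * X 0, C b * X 1] (monomial m c : Kp)
      = monomial m (a ^ m 0 * b ^ m 1 * c) := by
  rw [aeval_monomial, Finsupp.prod_fintype _ _ (fun i => pow_zero _), Fin.prod_univ_two]
  simp only [Matrix.cons_val_zero, Matrix.cons_val_one, Matrix.head_cons]
  rw [aux12_monomial_eq]
  have : (algebraMap ℂ Kp) c = C c := rfl
  rw [this, mul_pow, mul_pow, ← map_pow, ← map_pow, map_mul, map_mul]
  ring

lemma aux12_diag_coeff (a b : ℂ) (p : Kp) (m : Fin 2 →₀ ℕ) :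
    MvPolynomial.coeff m (aeval ![C a * X 0, C b * X 1] p)
      = a ^ m 0 * b ^ m 1 * MvPolynomial.coeff m p := by
  conv_lhs => rw [p.as_sum]
  rw [map_sum, MvPolynomial.coeff_sum]
  simp only [aux12_diag_monomial, MvPolynomial.coeff_monomial]
  rw [Finset.sum_ite_eq' p.support m (fun m' => a ^ m' 0 * b ^ m' 1 * MvPolynomial.coeff m' p)]
  by_cases hm : m ∈ p.support
  · rw [if_pos hm]
  · rw [if_neg hm, MvPolynomial.notMem_support_iff.mp hm, mul_zero]




lemma aux12_mono_mem (n : ℕ) (m : Fin 2 →₀ ℕ) (c : ℂ)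
    (hd : (n : ℤ) ∣ (m 0 : ℤ) - (m 1 : ℤ)) :
    (monomial m c : Kp) ∈ Algebra.adjoin ℂ ({X 0 * X 1, X 0 ^ n, X 1 ^ n} : Set Kp) := by
  set A := Algebra.adjoin ℂ ({X 0 * X 1, X 0 ^ n, X 1 ^ n} : Set Kp) with hA
  have hXY : (X 0 * X 1 : Kp) ∈ A := Algebra.subset_adjoin (by simp)
  have hXn : (X 0 ^ n : Kp) ∈ A := Algebra.subset_adjoin (by simp)
  have hYn : (X 1 ^ n : Kp) ∈ A := Algebra.subset_adjoin (by simp)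
  have hC : (C c : Kp) ∈ A := Subalgebra.algebraMap_mem A c
  rcases le_total (m 1) (m 0) with hle | hle
  · obtain ⟨k, hk⟩ : n ∣ m 0 - m 1 :=
      Int.natCast_dvd_natCast.mp (by rwa [Nat.cast_sub hle])
    have hm0 : m 0 = m 1 + n * k := by omega
    have key : (monomial m c : Kp) = C c * ((X 0 * X 1) ^ m 1 * ((X 0 ^ n) ^ k)) := by
      rw [aux12_monomial_eq, hm0, pow_add, pow_mul]; ring
    rw [key]
    exact mul_mem hC (mul_mem (pow_mem hXY _) (pow_mem hXn _))
  · obtain ⟨k, hk⟩ : n ∣ m 1 - m 0 :=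
      Int.natCast_dvd_natCast.mp (by rw [Nat.cast_sub hle, ← neg_sub]; exact dvd_neg.mpr hd)
    have hm1 : m 1 = m 0 + n * k := by omega
    have key : (monomial m c : Kp) = C c * ((X 0 * X 1) ^ m 0 * ((X 1 ^ n) ^ k)) := by
      rw [aux12_monomial_eq, hm1, pow_add, pow_mul]; ring
    rw [key]
    exact mul_mem hC (mul_mem (pow_mem hXY _) (pow_mem hYn _))

lemma aux12_diag_invariant (n : ℕ) (hn : 0 < n) (ω : ℂ) (hω : IsPrimitiveRoot ω n) (g : Kp)
    (hg : aeval ![C ω * X 0, C ω⁻¹ * X 1] g = g) :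
    g ∈ Algebra.adjoin ℂ ({X 0 * X 1, X 0 ^ n, X 1 ^ n} : Set Kp) := by
  have hω0 : ω ≠ 0 := hω.ne_zero hn.ne'
  rw [g.as_sum]
  refine Subalgebra.sum_mem _ fun m hm => aux12_mono_mem n m _ ?_
  have hcm : MvPolynomial.coeff m g ≠ 0 := MvPolynomial.mem_support_iff.mp hm
  have hcoeff := congrArg (MvPolynomial.coeff m) hg
  rw [aux12_diag_coeff] at hcoeff
  have hsc : ω ^ m 0 * ω⁻¹ ^ m 1 = 1 := by
    have h2 : ω ^ m 0 * ω⁻¹ ^ m 1 * coeff m g = 1 * coeff m g := by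
      rw [one_mul]; exact hcoeff
    rcases mul_eq_mul_right_iff.mp h2 with h | h
    · exact h
    · exact absurd h hcm
  have hpow : ω ^ m 0 = ω ^ m 1 := by
    have h1 : ω⁻¹ ^ m 1 * ω ^ m 1 = 1 := by
      rw [← mul_pow, inv_mul_cancel₀ hω0, one_pow]
    calc ω ^ m 0 = ω ^ m 0 * (ω⁻¹ ^ m 1 * ω ^ m 1) := by rw [h1, mul_one]
    _ = (ω ^ m 0 * ω⁻¹ ^ m 1) * ω ^ m 1 := by ring
    _ = ω ^ m 1 := by rw [hsc, one_mul]
  refine (hω.zpow_eq_one_iff_dvd ((m 0 : ℤ) - (m 1 : ℤ))).mp ?_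
  rw [zpow_sub₀ hω0, zpow_natCast, zpow_natCast, hpow, div_self (pow_ne_zero _ hω0)]


def phiV : Fin 2 → Kp := ![X 0 + C Complex.I * X 1, X 0 - C Complex.I * X 1]
def psiV : Fin 2 → Kp := ![C (1/2 : ℂ) * (X 0 + X 1), C (-Complex.I/2) * (X 0 - X 1)]

lemma aux12_CI_sq : (C Complex.I : Kp) ^ 2 = -1 := by
  rw [← map_pow, Complex.I_sq, map_neg, map_one]

lemma aux12_half : (C (1/2 : ℂ) : Kp) + C (1/2 : ℂ) = 1 := by
  rw [← map_add]; norm_num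

lemma aux12_psi_phi (p : Kp) : aeval psiV (aeval phiV p) = p := by
  rw [comp_aeval_apply]
  have hmul : (C Complex.I : Kp) * C (-Complex.I/2) = C (1/2 : ℂ) := by
    rw [← map_mul]
    congr 1
    linear_combination (-(1:ℂ)/2) * Complex.I_sq
  have h0 : aeval psiV (phiV 0) = (X 0 : Kp) := by
    simp only [phiV, psiV, Fin.isValue, Matrix.cons_val_zero, Matrix.cons_val_one,
      Matrix.head_cons, map_add, map_sub, map_mul, aeval_X, aeval_C, algebraMap_eq]
    linear_combination (X 0 : Kp) * aux12_half + (X 0 - X 1 : Kp) * hmul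
  have h1 : aeval psiV (phiV 1) = (X 1 : Kp) := by
    simp only [phiV, psiV, Fin.isValue, Matrix.cons_val_zero, Matrix.cons_val_one,
      Matrix.head_cons, map_add, map_sub, map_mul, aeval_X, aeval_C, algebraMap_eq]
    linear_combination (X 1 : Kp) * aux12_half - (X 0 - X 1 : Kp) * hmul
  have hfun : (fun i => aeval psiV (phiV i)) = X := by
    funext i
    fin_cases i
    · exact h0
    · exact h1
  rw [hfun, aeval_X_left_apply]

lemma aux12_phi_psi (p : Kp) : aeval phiV (aeval psiV p) = p := by
  rw [comp_aeval_apply]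
  have h2 : (C (-Complex.I/2) * C Complex.I : Kp) * 2 = 1 := by
    have h2' : (2 : Kp) = C (2 : ℂ) := (map_ofNat C 2).symm
    rw [h2', ← map_mul, ← map_mul, ← map_one (C : ℂ →+* Kp)]
    congr 1
    linear_combination -Complex.I_sq
  have h0 : aeval phiV (psiV 0) = (X 0 : Kp) := by
    simp only [phiV, psiV, Fin.isValue, Matrix.cons_val_zero, Matrix.cons_val_one,
      Matrix.head_cons, map_add, map_sub, map_mul, aeval_X, aeval_C, algebraMap_eq]
    linear_combination (X 0 : Kp) * aux12_half
  have h1 : aeval phiV (psiV 1) = (X 1 : Kp) := by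
    simp only [phiV, psiV, Fin.isValue, Matrix.cons_val_zero, Matrix.cons_val_one,
      Matrix.head_cons, map_add, map_sub, map_mul, aeval_X, aeval_C, algebraMap_eq]
    linear_combination (X 1 : Kp) * h2
  have hfun : (fun i => aeval phiV (psiV i)) = X := by
    funext i
    fin_cases i
    · exact h0
    · exact h1
  rw [hfun, aeval_X_left_apply]

lemma aux12_cs (θ : ℝ) :
    ((Real.cos θ : ℂ) + (Real.sin θ : ℂ) * Complex.I)
      * ((Real.cos θ : ℂ) - (Real.sin θ : ℂ) * Complex.I) = 1 := by
  have h : ((Real.sin θ : ℂ))^2 + ((Real.cos θ : ℂ))^2 = 1 := by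
    have := Real.sin_sq_add_cos_sq θ
    exact_mod_cast congrArg (Complex.ofReal) this
  linear_combination h - (Real.sin θ : ℂ)^2 * Complex.I_sq

lemma aux12_exp_eq (θ : ℝ) :
    Complex.exp (θ * Complex.I) = (Real.cos θ : ℂ) + (Real.sin θ : ℂ) * Complex.I := by
  rw [Complex.exp_mul_I, Complex.ofReal_cos, Complex.ofReal_sin]

lemma aux12_exp_inv (θ : ℝ) :
    (Complex.exp (θ * Complex.I))⁻¹ = (Real.cos θ : ℂ) - (Real.sin θ : ℂ) * Complex.I := by
  rw [aux12_exp_eq]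
  exact inv_eq_of_mul_eq_one_right (aux12_cs θ)

def rotV (θ : ℝ) : Fin 2 → Kp :=
  ![C ((Real.cos θ : ℂ)) * X 0 - C ((Real.sin θ : ℂ)) * X 1,
    C ((Real.sin θ : ℂ)) * X 0 + C ((Real.cos θ : ℂ)) * X 1]

lemma aux12_rot_z (θ : ℝ) :
    aeval (rotV θ) (X 0 + C Complex.I * X 1 : Kp)
      = C (Complex.exp (θ * Complex.I)) * (X 0 + C Complex.I * X 1) := by
  have hCω : (C (Complex.exp (θ * Complex.I)) : Kp)
      = C ((Real.cos θ : ℂ)) + C ((Real.sin θ : ℂ)) * C Complex.I := by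
    rw [aux12_exp_eq, map_add, map_mul]
  simp only [rotV, map_add, map_sub, map_mul, aeval_X, aeval_C, algebraMap_eq,
    Matrix.cons_val_zero, Matrix.cons_val_one, Matrix.head_cons, Fin.isValue]
  rw [hCω]
  linear_combination (-(C ((Real.sin θ : ℂ)) * X 1 : Kp)) * aux12_CI_sq

lemma aux12_rot_w (θ : ℝ) :
    aeval (rotV θ) (X 0 - C Complex.I * X 1 : Kp)
      = C ((Complex.exp (θ * Complex.I))⁻¹) * (X 0 - C Complex.I * X 1) := by
  have hCω : (C ((Complex.exp (θ * Complex.I))⁻¹) : Kp)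
      = C ((Real.cos θ : ℂ)) - C ((Real.sin θ : ℂ)) * C Complex.I := by
    rw [aux12_exp_inv, map_sub, map_mul]
  simp only [rotV, map_add, map_sub, map_mul, aeval_X, aeval_C, algebraMap_eq,
    Matrix.cons_val_zero, Matrix.cons_val_one, Matrix.head_cons, Fin.isValue]
  rw [hCω]
  linear_combination (-(C ((Real.sin θ : ℂ)) * X 1 : Kp)) * aux12_CI_sq

lemma aux12_map_aeval (p q f : Rp) :
    MvPolynomial.map (algebraMap ℝ ℂ) (aeval ![p, q] f)
      = aeval ![MvPolynomial.map (algebraMap ℝ ℂ) p, MvPolynomial.map (algebraMap ℝ ℂ) q]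
          (MvPolynomial.map (algebraMap ℝ ℂ) f) := by
  induction f using MvPolynomial.induction_on with
  | C r => simp [aeval_C, algebraMap_eq]
  | add f g hf hg => simp only [map_add, hf, hg]
  | mul_X f i hf =>
    have hvi : MvPolynomial.map (algebraMap ℝ ℂ) (![p, q] i)
        = ![MvPolynomial.map (algebraMap ℝ ℂ) p, MvPolynomial.map (algebraMap ℝ ℂ) q] i := by
      fin_cases i <;> simp
    simp only [map_mul, aeval_X, hf, hvi, MvPolynomial.map_X]
end Aux12
set_option maxHeartbeats 1000000 in
open MvPolynomial in
/-- The ring of invariants of ℝ[x,y] under the rotation of order n is generated by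
x² + y², Re((x+iy)ⁿ) and Im((x+iy)ⁿ), where the real polynomials u = Re((x+iy)ⁿ) and
v = Im((x+iy)ⁿ) are characterized by u + iv = (x+iy)ⁿ over ℂ. -/
theorem stmt_12 (n : ℕ) (hn : 0 < n) (u v : MvPolynomial (Fin 2) ℝ)
    (huv : MvPolynomial.map (algebraMap ℝ ℂ) u +
        C Complex.I * MvPolynomial.map (algebraMap ℝ ℂ) v =
      (X 0 + C Complex.I * X 1) ^ n) :
    {f : MvPolynomial (Fin 2) ℝ |
        aeval ![C (Real.cos (2 * Real.pi / (n : ℝ))) * X 0 -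
                  C (Real.sin (2 * Real.pi / (n : ℝ))) * X 1,
                C (Real.sin (2 * Real.pi / (n : ℝ))) * X 0 +
                  C (Real.cos (2 * Real.pi / (n : ℝ))) * X 1] f = f}
      = ↑(Algebra.adjoin ℝ ({X 0 ^ 2 + X 1 ^ 2, u, v} : Set (MvPolynomial (Fin 2) ℝ))) := by
  set θ : ℝ := 2 * Real.pi / (n : ℝ) with hθdef
  set vR : Fin 2 → Rp :=
    ![C (Real.cos θ) * X 0 - C (Real.sin θ) * X 1,
      C (Real.sin θ) * X 0 + C (Real.cos θ) * X 1] with hvRdef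
  set ω : ℂ := Complex.exp ((θ : ℂ) * Complex.I) with hωdef
  -- ω is a primitive n-th root of unity
  have hprim : IsPrimitiveRoot ω n := by
    have h := Complex.isPrimitiveRoot_exp n hn.ne'
    have heq : (θ : ℂ) * Complex.I = 2 * Real.pi * Complex.I / n := by
      rw [hθdef]; push_cast; ring
    rwa [hωdef, heq]
  have hωn : ω ^ n = 1 := hprim.pow_eq_one
  -- the complexified rotation commutes with the coefficient map
  have hcomm : ∀ f : Rp, MvPolynomial.map (algebraMap ℝ ℂ) (aeval vR f)
      = aeval (rotV θ) (MvPolynomial.map (algebraMap ℝ ℂ) f) := by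
    intro f
    have hvec : (![MvPolynomial.map (algebraMap ℝ ℂ) (vR 0),
        MvPolynomial.map (algebraMap ℝ ℂ) (vR 1)] : Fin 2 → Kp) = rotV θ := by
      funext i
      fin_cases i <;>
        simp [hvRdef, rotV, map_sub, map_add, map_mul, MvPolynomial.map_C,
          MvPolynomial.map_X, Complex.coe_algebraMap]
    have h := aux12_map_aeval (vR 0) (vR 1) f
    have hv2 : (![vR 0, vR 1] : Fin 2 → Rp) = vR := by
      funext i; fin_cases i <;> rfl
    rw [hv2, hvec] at h
    exact h
  -- rotation fixes (X0 + i X1)^n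
  have hzn : aeval (rotV θ) ((X 0 + C Complex.I * X 1 : Kp) ^ n)
      = (X 0 + C Complex.I * X 1 : Kp) ^ n := by
    rw [map_pow, aux12_rot_z, mul_pow, ← map_pow, ← hωdef, hωn, map_one, one_mul]
  have hCI : ∀ w : Fin 2 → Kp, aeval w (C Complex.I : Kp) = C Complex.I := by
    intro w; rw [aeval_C, ← MvPolynomial.algebraMap_eq]
  have huvinv : MvPolynomial.map (algebraMap ℝ ℂ) (aeval vR u)
        + C Complex.I * MvPolynomial.map (algebraMap ℝ ℂ) (aeval vR v)
      = MvPolynomial.map (algebraMap ℝ ℂ) u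
        + C Complex.I * MvPolynomial.map (algebraMap ℝ ℂ) v := by
    rw [hcomm, hcomm]
    have hstep : aeval (rotV θ) (MvPolynomial.map (algebraMap ℝ ℂ) u)
        + C Complex.I * aeval (rotV θ) (MvPolynomial.map (algebraMap ℝ ℂ) v)
        = aeval (rotV θ) (MvPolynomial.map (algebraMap ℝ ℂ) u
            + C Complex.I * MvPolynomial.map (algebraMap ℝ ℂ) v) := by
      rw [map_add, map_mul, hCI]
    rw [hstep, huv, hzn, ← huv]
  have hu_inv : aeval vR u = u ∧ aeval vR v = v := by
    have key : MvPolynomial.map (algebraMap ℝ ℂ) (aeval vR u - u)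
        = C Complex.I * MvPolynomial.map (algebraMap ℝ ℂ) (v - aeval vR v) := by
      rw [map_sub, map_sub, mul_sub]
      linear_combination huvinv
    have h2 := aux12_re_im _ _ key
    exact ⟨sub_eq_zero.mp h2.1, (sub_eq_zero.mp h2.2).symm⟩
  have hxy_inv : aeval vR (X 0 ^ 2 + X 1 ^ 2 : Rp) = X 0 ^ 2 + X 1 ^ 2 := by
    have hcs1 : (C (Real.sin θ) : Rp) ^ 2 + (C (Real.cos θ) : Rp) ^ 2 = 1 := by
      rw [← map_pow, ← map_pow, ← map_add, Real.sin_sq_add_cos_sq, map_one]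
    simp only [map_add, map_pow, aeval_X, hvRdef, Matrix.cons_val_zero, Matrix.cons_val_one,
      Matrix.head_cons]
    linear_combination (X 0 ^ 2 + X 1 ^ 2 : Rp) * hcs1
  ext f
  simp only [Set.mem_setOf_eq, SetLike.mem_coe]
  constructor
  · -- hard direction
    intro hf
    have hF : aeval (rotV θ) (MvPolynomial.map (algebraMap ℝ ℂ) f)
        = MvPolynomial.map (algebraMap ℝ ℂ) f := by rw [← hcomm, hf]
    set g : Kp := aeval psiV (MvPolynomial.map (algebraMap ℝ ℂ) f) with hgdef
    have hφg : aeval phiV g = MvPolynomial.map (algebraMap ℝ ℂ) f := aux12_phi_psi _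
    have hDg : aeval ![C ω * X 0, C ω⁻¹ * X 1] g = g := by
      have hfun : (fun i => aeval phiV (![C ω * X 0, C ω⁻¹ * X 1] i))
          = fun i => aeval (rotV θ) (phiV i) := by
        funext i
        fin_cases i
        · show aeval phiV (C ω * X 0) = aeval (rotV θ) (phiV 0)
          rw [map_mul, aeval_X, aeval_C, MvPolynomial.algebraMap_eq]
          show C ω * phiV 0 = _
          have : phiV 0 = (X 0 + C Complex.I * X 1 : Kp) := rfl
          rw [this, aux12_rot_z, ← hωdef]
        · show aeval phiV (C ω⁻¹ * X 1) = aeval (rotV θ) (phiV 1)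
          rw [map_mul, aeval_X, aeval_C, MvPolynomial.algebraMap_eq]
          show C ω⁻¹ * phiV 1 = _
          have : phiV 1 = (X 0 - C Complex.I * X 1 : Kp) := rfl
          rw [this, aux12_rot_w, ← hωdef]
      have hkey : aeval phiV (aeval ![C ω * X 0, C ω⁻¹ * X 1] g) = aeval phiV g := by
        rw [comp_aeval_apply, hfun, ← comp_aeval_apply, hφg, hF, ← hφg]
      have := congrArg (aeval psiV) hkey
      rwa [aux12_psi_phi, aux12_psi_phi] at this
    have hgmem := aux12_diag_invariant n hn ω hprim g hDg
    have hFmem : MvPolynomial.map (algebraMap ℝ ℂ) f ∈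
        Algebra.adjoin ℂ ((aeval phiV : Kp →ₐ[ℂ] Kp) '' {X 0 * X 1, X 0 ^ n, X 1 ^ n}) := by
      rw [← AlgHom.map_adjoin]
      exact ⟨g, hgmem, hφg⟩
    have e1 : (aeval phiV : Kp →ₐ[ℂ] Kp) (X 0 * X 1)
        = (X 0 + C Complex.I * X 1) * (X 0 - C Complex.I * X 1) := by
      rw [map_mul, aeval_X, aeval_X]; rfl
    have e2 : (aeval phiV : Kp →ₐ[ℂ] Kp) (X 0 ^ n) = (X 0 + C Complex.I * X 1) ^ n := by
      rw [map_pow, aeval_X]; rfl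
    have e3 : (aeval phiV : Kp →ₐ[ℂ] Kp) (X 1 ^ n) = (X 0 - C Complex.I * X 1) ^ n := by
      rw [map_pow, aeval_X]; rfl
    have himg : (aeval phiV : Kp →ₐ[ℂ] Kp) '' {X 0 * X 1, X 0 ^ n, X 1 ^ n}
        = {(X 0 + C Complex.I * X 1) * (X 0 - C Complex.I * X 1),
           (X 0 + C Complex.I * X 1) ^ n, (X 0 - C Complex.I * X 1) ^ n} := by
      rw [Set.image_insert_eq, Set.image_insert_eq, Set.image_singleton, e1, e2, e3]
    rw [himg] at hFmem
    -- identify the three generators inside the target algebra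
    have hzw : ((X 0 + C Complex.I * X 1) * (X 0 - C Complex.I * X 1) : Kp)
        = MvPolynomial.map (algebraMap ℝ ℂ) (X 0 ^ 2 + X 1 ^ 2 : Rp) := by
      rw [map_add, map_pow, map_pow, MvPolynomial.map_X, MvPolynomial.map_X]
      linear_combination (-(X 1 ^ 2 : Kp)) * aux12_CI_sq
    have hwn : ((X 0 - C Complex.I * X 1 : Kp)) ^ n
        = MvPolynomial.map (algebraMap ℝ ℂ) u - C Complex.I * MvPolynomial.map (algebraMap ℝ ℂ) v := by
      have hconj := congrArg (MvPolynomial.map (starRingEnd ℂ)) huv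
      have hcomp : (starRingEnd ℂ).comp (algebraMap ℝ ℂ) = algebraMap ℝ ℂ :=
        RingHom.ext fun r => Complex.conj_ofReal r
      rw [map_add, map_mul, map_pow, map_add, map_mul] at hconj
      rw [MvPolynomial.map_map, MvPolynomial.map_map, hcomp] at hconj
      simp only [MvPolynomial.map_C, MvPolynomial.map_X, Complex.conj_I, map_neg] at hconj
      have hx : (X 0 + -C Complex.I * X 1 : Kp) = X 0 - C Complex.I * X 1 := by ring
      rw [hx] at hconj
      rw [← hconj]; ring
    have hmemB : MvPolynomial.map (algebraMap ℝ ℂ) f ∈ Algebra.adjoin ℂ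
        (MvPolynomial.map (algebraMap ℝ ℂ) '' ({X 0 ^ 2 + X 1 ^ 2, u, v} : Set Rp)) := by
      refine Algebra.adjoin_le ?_ hFmem
      have hCImem : (C Complex.I : Kp) ∈ Algebra.adjoin ℂ
          (MvPolynomial.map (algebraMap ℝ ℂ) '' ({X 0 ^ 2 + X 1 ^ 2, u, v} : Set Rp)) := by
        rw [← MvPolynomial.algebraMap_eq]
        exact Subalgebra.algebraMap_mem _ _
      have hum : MvPolynomial.map (algebraMap ℝ ℂ) u ∈ Algebra.adjoin ℂ
          (MvPolynomial.map (algebraMap ℝ ℂ) '' ({X 0 ^ 2 + X 1 ^ 2, u, v} : Set Rp)) :=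
        Algebra.subset_adjoin ⟨u, by simp, rfl⟩
      have hvm : MvPolynomial.map (algebraMap ℝ ℂ) v ∈ Algebra.adjoin ℂ
          (MvPolynomial.map (algebraMap ℝ ℂ) '' ({X 0 ^ 2 + X 1 ^ 2, u, v} : Set Rp)) :=
        Algebra.subset_adjoin ⟨v, by simp, rfl⟩
      rintro x hx
      simp only [Set.mem_insert_iff, Set.mem_singleton_iff] at hx
      rcases hx with rfl | rfl | rfl
      · rw [hzw]
        exact Algebra.subset_adjoin ⟨X 0 ^ 2 + X 1 ^ 2, by simp, rfl⟩
      · rw [← huv]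
        exact add_mem hum (mul_mem hCImem hvm)
      · rw [hwn]
        exact sub_mem hum (mul_mem hCImem hvm)
    obtain ⟨P, Q, hP, hQ, hPQ⟩ := aux12_decomp _ _ hmemB
    have hres : f - P = 0 ∧ Q = 0 := by
      refine aux12_re_im _ _ ?_
      rw [map_sub]
      linear_combination hPQ
    rw [sub_eq_zero.mp hres.1]
    exact hP
  · -- easy direction
    intro hf
    induction hf using Algebra.adjoin_induction with
    | mem x hx =>
      simp only [Set.mem_insert_iff, Set.mem_singleton_iff] at hx
      rcases hx with rfl | rfl | rfl
      · exact hxy_inv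
      · exact hu_inv.1
      · exact hu_inv.2
    | algebraMap r => rw [MvPolynomial.algebraMap_eq, aeval_C, MvPolynomial.algebraMap_eq]
    | add x y hx hy ihx ihy => rw [map_add, ihx, ihy]
    | mul x y hx hy ihx ihy => rw [map_mul, ihx, ihy]
end
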